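/- arXiv:2004.05899 — 3 statements merged into one kernel-verified Lean document; each statement's English description precedes it below -/
import Mathlib

section
/- For an R-module M, the unit η_M: M → Pb(Ind(M)), m ↦ (1 ⊗ m, 1 ⊗ m), is injective if and only if M is separated, i.e. M admits an injective R-linear map into X₁ ⊕ X₂ for some R₁-module X₁ and R₂-module X₂ (regarded as R-modules via i₁ and i₂). -/
/-! The unit is itself an `R`-linear map into the `R₁`-module `R₁ ⊗ M` times the `R₂`-module
`R₂ ⊗ M`. Conversely, by the universal property of base change every `R`-linear map
`M → X₁ × X₂` factors through the unit, so if it is injective then so is the unit. -/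

open TensorProduct

section Pullback

variable (R₁ R₂ R' : Type) [CommRing R₁] [CommRing R₂] [CommRing R']
variable [Algebra R₁ R'] [Algebra R₂ R']

/-- The pullback ring of `π₁ = algebraMap R₁ R'` and `π₂ = algebraMap R₂ R'`,
as a subring of `R₁ × R₂`. -/
def pullbackSubring : Subring (R₁ × R₂) :=
  RingHom.eqLocus ((algebraMap R₁ R').comp (RingHom.fst R₁ R₂))
    ((algebraMap R₂ R').comp (RingHom.snd R₁ R₂))

abbrev PB := ↥(pullbackSubring R₁ R₂ R')

def pbFst : PB R₁ R₂ R' →+* R₁ := (RingHom.fst R₁ R₂).comp (pullbackSubring R₁ R₂ R').subtype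
def pbSnd : PB R₁ R₂ R' →+* R₂ := (RingHom.snd R₁ R₂).comp (pullbackSubring R₁ R₂ R').subtype

instance : Algebra (PB R₁ R₂ R') R₁ := (pbFst R₁ R₂ R').toAlgebra
instance : Algebra (PB R₁ R₂ R') R₂ := (pbSnd R₁ R₂ R').toAlgebra
instance : Algebra (PB R₁ R₂ R') R' :=
  ((algebraMap R₁ R').comp (pbFst R₁ R₂ R')).toAlgebra

instance : IsScalarTower (PB R₁ R₂ R') R₁ R' :=
  IsScalarTower.of_algebraMap_eq fun a => rfl

instance : IsScalarTower (PB R₁ R₂ R') R₂ R' :=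
  IsScalarTower.of_algebraMap_eq fun a => a.2

end Pullback

open scoped TensorProduct

section BaseChangeUnit

variable {R A₁ A₂ M X₁ X₂ : Type*} [CommSemiring R] [CommSemiring A₁] [CommSemiring A₂]
  [Algebra R A₁] [Algebra R A₂] [AddCommMonoid M] [Module R M]
  [AddCommMonoid X₁] [Module R X₁] [Module A₁ X₁] [IsScalarTower R A₁ X₁]
  [AddCommMonoid X₂] [Module R X₂] [Module A₂ X₂] [IsScalarTower R A₂ X₂]

theorem prodMap_liftBaseChange_one_tmul (f : M →ₗ[R] X₁ × X₂) (m : M) :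
    Prod.map ((LinearMap.fst R X₁ X₂ ∘ₗ f).liftBaseChange A₁)
      ((LinearMap.snd R X₁ X₂ ∘ₗ f).liftBaseChange A₂)
      ((1 : A₁) ⊗ₜ[R] m, (1 : A₂) ⊗ₜ[R] m) = f m := by
  simp only [Prod.map, LinearMap.liftBaseChange_one_tmul, LinearMap.comp_apply,
    LinearMap.fst_apply, LinearMap.snd_apply]

theorem injective_one_tmul_prod_of_injective (f : M →ₗ[R] X₁ × X₂)
    (hf : Function.Injective f) :
    Function.Injective fun m : M => ((1 : A₁) ⊗ₜ[R] m, (1 : A₂) ⊗ₜ[R] m) := by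
  intro m m' h
  have hfm := congrArg (Prod.map ((LinearMap.fst R X₁ X₂ ∘ₗ f).liftBaseChange A₁)
    ((LinearMap.snd R X₁ X₂ ∘ₗ f).liftBaseChange A₂)) h
  rw [prodMap_liftBaseChange_one_tmul, prodMap_liftBaseChange_one_tmul] at hfm
  exact hf hfm

end BaseChangeUnit

/-- for an `R`-module `M` over the pullback ring `R`, the unit
`η_M : M → Pb(Ind M)`, `m ↦ (1 ⊗ m, 1 ⊗ m)`, is injective if and only if `M` is separated,
i.e. `M` admits an injective `R`-linear map into `X₁ ⊕ X₂` for some `R₁`-module `X₁` and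
`R₂`-module `X₂` (regarded as `R`-modules by restriction of scalars along `i₁`, `i₂`). -/
theorem unit_injective_iff_separated
    (R₁ R₂ R' : Type) [CommRing R₁] [CommRing R₂] [CommRing R']
    [Algebra R₁ R'] [Algebra R₂ R']
    (M : Type) [AddCommGroup M] [Module (PB R₁ R₂ R') M] :
    letI R := PB R₁ R₂ R'
    (Function.Injective fun m : M =>
        (((1 : R₁) ⊗ₜ[R] m : R₁ ⊗[R] M), ((1 : R₂) ⊗ₜ[R] m : R₂ ⊗[R] M))) ↔
      ∃ (X₁ : Type) (_ : AddCommGroup X₁) (_ : Module R₁ X₁)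
        (_ : Module (PB R₁ R₂ R') X₁) (_ : IsScalarTower (PB R₁ R₂ R') R₁ X₁)
        (X₂ : Type) (_ : AddCommGroup X₂) (_ : Module R₂ X₂)
        (_ : Module (PB R₁ R₂ R') X₂) (_ : IsScalarTower (PB R₁ R₂ R') R₂ X₂)
        (f : M →ₗ[PB R₁ R₂ R'] X₁ × X₂), Function.Injective f := by
  constructor
  · intro hunit
    exact ⟨R₁ ⊗[PB R₁ R₂ R'] M, inferInstance, inferInstance, inferInstance, inferInstance,
      R₂ ⊗[PB R₁ R₂ R'] M, inferInstance, inferInstance, inferInstance, inferInstance,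
      (TensorProduct.mk _ R₁ M 1).prod (TensorProduct.mk _ R₂ M 1), hunit⟩
  · rintro ⟨X₁, _, _, _, _, X₂, _, _, _, _, f, hf⟩
    exact injective_one_tmul_prod_of_injective f hf
end

section
/- If π₁: R₁ → R' is surjective, then for every R-module M the unit η_M: M → Pb(Ind(M)) of the adjunction (Ind, Pb) is surjective. -/
/-!
Since `π₁` is onto, so is `R → R₂`, hence every element of `R₂ ⊗_R M` is `1 ⊗ m₂`. Subtracting
`1 ⊗ m₂` from `x₁` leaves an element killed by `R₁ ⊗_R M → R' ⊗_R M`, which by right exactness of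
`- ⊗_R M` comes from `ker π₁ ⊗_R M`. As `ker π₁` embeds into `R` by `a ↦ (a, 0)`, that element is
`1 ⊗ m` for some `m` with `1 ⊗ m = 0` in `R₂ ⊗_R M`, and `m₂ + m` is the required preimage.
-/

open TensorProduct

open scoped TensorProduct

open LinearMap

section BaseChange

variable {R A M : Type*} [CommSemiring R] [AddCommMonoid M] [Module R M]

theorem rTensor_algebraLinearMap_apply [Semiring A] [Algebra R A] (y : R ⊗[R] M) :
    (Algebra.linearMap R A).rTensor M y = 1 ⊗ₜ TensorProduct.lid R M y := by
  obtain ⟨m, rfl⟩ := (TensorProduct.lid R M).symm.surjective y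
  simp

theorem exists_eq_one_tmul_of_surjective [Semiring A] [Algebra R A]
    (h : Function.Surjective (algebraMap R A)) (x : A ⊗[R] M) : ∃ m : M, x = 1 ⊗ₜ m := by
  obtain ⟨y, rfl⟩ := rTensor_surjective M (g := Algebra.linearMap R A) h x
  exact ⟨_, rTensor_algebraLinearMap_apply y⟩

theorem cancelBaseChange_one_tmul {B : Type*} [CommSemiring A] [CommSemiring B] [Algebra R A]
    [Algebra A B] [Algebra R B] [IsScalarTower R A B] (x : A ⊗[R] M) :
    AlgebraTensorModule.cancelBaseChange R A B B M (1 ⊗ₜ x) =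
      (IsScalarTower.toAlgHom R A B).toLinearMap.rTensor M x := by
  induction x using TensorProduct.induction_on with
  | zero => simp
  | tmul a m => simp [Algebra.smul_def]
  | add x y hx hy => rw [tmul_add, map_add, map_add, hx, hy]

end BaseChange

section Pullback

variable {R₁ R₂ R' : Type} [CommRing R₁] [CommRing R₂] [CommRing R']
  [Algebra R₁ R'] [Algebra R₂ R']

theorem surjective_algebraMap_pullback_snd (h : Function.Surjective (algebraMap R₁ R')) :
    Function.Surjective (algebraMap (PB R₁ R₂ R') R₂) := fun r₂ ↦
  let ⟨r₁, hr₁⟩ := h (algebraMap R₂ R' r₂)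
  ⟨⟨(r₁, r₂), hr₁⟩, rfl⟩

variable (R₁ R₂ R')

def kerToPullback :
    LinearMap.ker (IsScalarTower.toAlgHom (PB R₁ R₂ R') R₁ R').toLinearMap →ₗ[PB R₁ R₂ R']
      PB R₁ R₂ R' where
  toFun a := ⟨((a : R₁), 0),
    show algebraMap R₁ R' a = algebraMap R₂ R' 0 by rw [map_zero]; exact a.2⟩
  map_add' a b := by ext <;> simp
  map_smul' r a := by
    ext
    · rfl
    · exact (mul_zero _).symm

theorem algebraLinearMap_fst_comp_kerToPullback :
    Algebra.linearMap (PB R₁ R₂ R') R₁ ∘ₗ kerToPullback R₁ R₂ R' = Submodule.subtype _ := rfl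

theorem algebraLinearMap_snd_comp_kerToPullback :
    Algebra.linearMap (PB R₁ R₂ R') R₂ ∘ₗ kerToPullback R₁ R₂ R' = 0 := rfl

variable {R₁ R₂ R'} {M : Type} [AddCommGroup M] [Module (PB R₁ R₂ R') M]

theorem exists_eq_one_tmul_of_rTensor_eq_zero (h : Function.Surjective (algebraMap R₁ R'))
    {x : R₁ ⊗[PB R₁ R₂ R'] M}
    (hx : (IsScalarTower.toAlgHom (PB R₁ R₂ R') R₁ R').toLinearMap.rTensor M x = 0) :
    ∃ m : M, x = 1 ⊗ₜ m ∧ (1 : R₂) ⊗ₜ[PB R₁ R₂ R'] m = 0 := by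
  obtain ⟨z, rfl⟩ := (rTensor_exact M (exact_subtype_ker_map _) h x).mp hx
  refine ⟨TensorProduct.lid _ M ((kerToPullback R₁ R₂ R').rTensor M z), ?_, ?_⟩
  · rw [← rTensor_algebraLinearMap_apply, ← rTensor_comp_apply,
      algebraLinearMap_fst_comp_kerToPullback]
  · rw [← rTensor_algebraLinearMap_apply, ← rTensor_comp_apply,
      algebraLinearMap_snd_comp_kerToPullback, rTensor_zero, LinearMap.zero_apply]

end Pullback

/-- if `π₁ : R₁ → R'` is surjective, then for every module `M` over the
pullback ring `R` the unit `η_M : M → Pb(Ind M)`, `m ↦ (1 ⊗ m, 1 ⊗ m)`, is surjective: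
every element of `Pb(R₁ ⊗_R M, R₂ ⊗_R M; can_M) ⊆ (R₁ ⊗_R M) ⊕ (R₂ ⊗_R M)` is of the form
`(1 ⊗ m, 1 ⊗ m)`.  (Membership in the pullback is expressed via the canonical isomorphisms
`R' ⊗_{Rᵢ} (Rᵢ ⊗_R M) ≅ R' ⊗_R M`.) -/
theorem unit_surjective_of_surjective
    (R₁ R₂ R' : Type) [CommRing R₁] [CommRing R₂] [CommRing R']
    [Algebra R₁ R'] [Algebra R₂ R']
    (hπ₁ : Function.Surjective (algebraMap R₁ R'))
    (M : Type) [AddCommGroup M] [Module (PB R₁ R₂ R') M] :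
    letI R := PB R₁ R₂ R'
    letI e₁ : (R' ⊗[R₁] (R₁ ⊗[R] M)) ≃ₗ[R'] R' ⊗[R] M :=
      TensorProduct.AlgebraTensorModule.cancelBaseChange R R₁ R' R' M
    letI e₂ : (R' ⊗[R₂] (R₂ ⊗[R] M)) ≃ₗ[R'] R' ⊗[R] M :=
      TensorProduct.AlgebraTensorModule.cancelBaseChange R R₂ R' R' M
    ∀ (x₁ : R₁ ⊗[R] M) (x₂ : R₂ ⊗[R] M),
      e₁ ((1 : R') ⊗ₜ[R₁] x₁) = e₂ ((1 : R') ⊗ₜ[R₂] x₂) →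
        ∃ m : M, x₁ = (1 : R₁) ⊗ₜ[R] m ∧ x₂ = (1 : R₂) ⊗ₜ[R] m := by
  intro x₁ x₂ hx
  simp only [cancelBaseChange_one_tmul] at hx
  obtain ⟨m₂, rfl⟩ :=
    exists_eq_one_tmul_of_surjective (surjective_algebraMap_pullback_snd hπ₁) x₂
  have hker : (IsScalarTower.toAlgHom (PB R₁ R₂ R') R₁ R').toLinearMap.rTensor M
      (x₁ - 1 ⊗ₜ m₂) = 0 := by
    rw [map_sub, hx]
    simp
  obtain ⟨m, hm₁, hm₂⟩ := exists_eq_one_tmul_of_rTensor_eq_zero hπ₁ hker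
  refine ⟨m₂ + m, ?_, by rw [tmul_add, hm₂, add_zero]⟩
  rw [tmul_add, ← hm₁, add_sub_cancel]
end

section
/- Let F: C → D be an additive functor between additive categories. If F is full and its kernel ideal (the morphisms annihilated by F) is nilpotent, then F detects isomorphisms: a morphism f in C is an isomorphism if and only if F(f) is an isomorphism. In particular, F induces an epivalence from C onto its essential image. -/
/- Lift the inverse of `F f` to some `g`, using fullness. Then `F` kills `f ≫ g - 𝟙`, which is
therefore nilpotent in the ring `End X`, so `f ≫ g = 𝟙 + (f ≫ g - 𝟙)` is a unit; likewise `g ≫ f`.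
A morphism `f` for which both `f ≫ g` and `g ≫ f` are invertible is itself invertible. -/

open CategoryTheory

/-- The `n`-th power of the kernel ideal of a functor `F`: morphisms expressible as
composites involving `n` morphisms annihilated by `F` (with `n = 0` giving all morphisms). -/
def kernelIdealPow {C D : Type*} [Category C] [Category D]
    [Preadditive C] [Preadditive D] (F : C ⥤ D) :
    ℕ → ∀ (X Y : C), Set (X ⟶ Y)
  | 0, _, _ => Set.univ
  | n + 1, X, Y =>
      {f | ∃ (Z : C) (g : X ⟶ Z) (h : Z ⟶ Y),
        F.map h = 0 ∧ g ∈ kernelIdealPow F n X Z ∧ f = g ≫ h}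

namespace CategoryTheory

variable {C D : Type*} [Category C] [Category D]

theorem isIso_of_isIso_comp_of_isIso_comp {X Y : C} (f : X ⟶ Y) (g : Y ⟶ X)
    [IsIso (f ≫ g)] [IsIso (g ≫ f)] : IsIso f :=
  have : IsSplitMono f :=
    IsSplitMono.mk' ⟨g ≫ inv (f ≫ g), by rw [← Category.assoc, IsIso.hom_inv_id]⟩
  have : Epi f := epi_of_epi g f
  isIso_of_epi_of_isSplitMono f

variable [Preadditive C] [Preadditive D] (F : C ⥤ D)

theorem pow_mem_kernelIdealPow {X : C} {e : End X} (he : F.map e = 0) (m : ℕ) :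
    e ^ m ∈ kernelIdealPow F m X X := by
  induction m with
  | zero => trivial
  | succ k ih => exact ⟨X, e ^ k, e, he, ih, pow_succ' e k⟩

theorem isNilpotent_of_map_eq_zero {n : ℕ}
    (hn : ∀ (X Y : C) (f : X ⟶ Y), f ∈ kernelIdealPow F n X Y → f = 0)
    {X : C} {e : End X} (he : F.map e = 0) : IsNilpotent e :=
  ⟨n, hn X X _ (pow_mem_kernelIdealPow F he n)⟩

theorem isIso_of_map_eq_id [F.Additive] {n : ℕ}
    (hn : ∀ (X Y : C) (f : X ⟶ Y), f ∈ kernelIdealPow F n X Y → f = 0)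
    {X : C} (a : X ⟶ X) (ha : F.map a = 𝟙 (F.obj X)) : IsIso a := by
  have hnil : IsNilpotent (show End X from a - 𝟙 X) :=
    isNilpotent_of_map_eq_zero F hn (by simp [ha])
  rw [← isUnit_iff_isIso]
  simpa using hnil.isUnit_one_add

end CategoryTheory

/-- let `F : C → D` be an additive functor between additive categories.
If `F` is full and its kernel ideal is nilpotent, then `F` detects isomorphisms:
`f` is an isomorphism iff `F f` is.  In particular `F` induces an epivalence onto its
essential image (it is full onto its essential image, dense there by definition, and
detects isomorphisms). -/
theorem full_functor_nilpotent_kernel_detects_isos {C D : Type*} [Category C] [Category D]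
    [Preadditive C] [Preadditive D] (F : C ⥤ D) [F.Additive] [F.Full]
    (hnil : ∃ n : ℕ, 1 ≤ n ∧ ∀ (X Y : C) (f : X ⟶ Y), f ∈ kernelIdealPow F n X Y → f = 0) :
    ∀ {X Y : C} (f : X ⟶ Y), IsIso f ↔ IsIso (F.map f) := by
  obtain ⟨n, -, hn⟩ := hnil
  intro X Y f
  refine ⟨fun _ ↦ inferInstance, fun _ ↦ ?_⟩
  obtain ⟨g, hg⟩ := F.map_surjective (inv (F.map f))
  have : IsIso (f ≫ g) := isIso_of_map_eq_id F hn _ (by simp [hg])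
  have : IsIso (g ≫ f) := isIso_of_map_eq_id F hn _ (by simp [hg])
  exact isIso_of_isIso_comp_of_isIso_comp f g
end
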